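/- arXiv:2303.15305 — 2 statements merged into one kernel-verified Lean document; each statement's English description precedes it below -/
import Mathlib

section
/- Let α, β, γ : ℝ with α > β, set ξ = (γ - β)/(α - β), and let w_m, l_m, d_m, w_n, l_n, d_n : ℕ with w_m + l_m + d_m = w_n + l_n + d_n = T₀. Then α·(w_m:ℝ) + β·(l_m:ℝ) + γ·(d_m:ℝ) > α·(w_n:ℝ) + β·(l_n:ℝ) + γ·(d_n:ℝ) if and only if (w_m:ℝ) + ξ·(d_m:ℝ) > (w_n:ℝ) + ξ·(d_n:ℝ). In words: when all teams play the same number T₀ of games, sorting the scores s_m = w_m + ξ·d_m in descending order ranks the teams exactly by their likelihood of being the best. -/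
/-- with equal number of games, the likelihood of being the best
is ordered exactly as the score `s_m = w_m + ξ·d_m`. -/
theorem best_ranking_by_score (α β γ : ℝ) (hαβ : α > β)
    (ξ : ℝ) (hξ : ξ = (γ - β) / (α - β))
    (wm lm dm wn ln dn T₀ : ℕ)
    (hm : wm + lm + dm = T₀) (hn : wn + ln + dn = T₀) :
    α * (wm : ℝ) + β * (lm : ℝ) + γ * (dm : ℝ)
        > α * (wn : ℝ) + β * (ln : ℝ) + γ * (dn : ℝ)
      ↔ (wm : ℝ) + ξ * (dm : ℝ) > (wn : ℝ) + ξ * (dn : ℝ) := by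
  have hpos : α - β > 0 := sub_pos.mpr hαβ
  have hne : α - β ≠ 0 := ne_of_gt hpos
  have hξ' : ξ * (α - β) = γ - β := by
    rw [hξ]; field_simp
  have hm' : (wm : ℝ) + lm + dm = T₀ := by exact_mod_cast congrArg (Nat.cast : ℕ → ℝ) hm
  have hn' : (wn : ℝ) + ln + dn = T₀ := by exact_mod_cast congrArg (Nat.cast : ℕ → ℝ) hn
  have key : (α * (wm : ℝ) + β * lm + γ * dm) - (α * wn + β * ln + γ * dn)
      = (α - β) * (((wm : ℝ) + ξ * dm) - ((wn : ℝ) + ξ * dn)) := by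
    linear_combination ((dn : ℝ) - dm) * hξ' + β * hm' - β * hn'
  constructor <;> intro H
  · have h2 : (α - β) * (((wm : ℝ) + ξ * dm) - ((wn : ℝ) + ξ * dn)) > 0 := by
      rw [← key]; linarith
    have := mul_pos_iff.mp h2
    rcases this with ⟨_, h⟩ | ⟨h, _⟩
    · linarith
    · linarith
  · nlinarith [mul_pos hpos (sub_pos.mpr H)]
end

section
/- Let α, β, γ : ℝ with α > β, set ξ = (γ - β)/(α - β), and let w_m, l_m, d_m, w_n, l_n, d_n : ℕ with w_m + l_m + d_m = w_n + l_n + d_n = T₀. Then β·(w_m:ℝ) + α·(l_m:ℝ) + γ·(d_m:ℝ) > β·(w_n:ℝ) + α·(l_n:ℝ) + γ·(d_n:ℝ) if and only if (l_m:ℝ) + ξ·(d_m:ℝ) > (l_n:ℝ) + ξ·(d_n:ℝ). In words: when all teams play the same number T₀ of games, sorting the anti-scores s̄_m = l_m + ξ·d_m in ascending order ranks the teams exactly by their likelihood of being the worst, the largest s̄_m identifying the team most likely to be worst. -/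
/-- with equal number of games, the likelihood of being the worst
is ordered exactly as the anti-score `s̄_m = l_m + ξ·d_m`. -/
theorem worst_ranking_by_antiscore (α β γ : ℝ) (hαβ : α > β)
    (ξ : ℝ) (hξ : ξ = (γ - β) / (α - β))
    (wm lm dm wn ln dn T₀ : ℕ)
    (hm : wm + lm + dm = T₀) (hn : wn + ln + dn = T₀) :
    β * (wm : ℝ) + α * (lm : ℝ) + γ * (dm : ℝ)
        > β * (wn : ℝ) + α * (ln : ℝ) + γ * (dn : ℝ)
      ↔ (lm : ℝ) + ξ * (dm : ℝ) > (ln : ℝ) + ξ * (dn : ℝ) := by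
  have hab : α - β > 0 := sub_pos.mpr hαβ
  have hm' : (wm : ℝ) + lm + dm = T₀ := by exact_mod_cast hm
  have hn' : (wn : ℝ) + ln + dn = T₀ := by exact_mod_cast hn
  have hξ' : ξ * (α - β) = γ - β := by
    rw [hξ]; field_simp
  have em : β * (wm : ℝ) + α * lm + γ * dm
      = β * T₀ + (α - β) * ((lm : ℝ) + ξ * dm) := by
    linear_combination β * hm' - (dm : ℝ) * hξ'
  have en : β * (wn : ℝ) + α * ln + γ * dn
      = β * T₀ + (α - β) * ((ln : ℝ) + ξ * dn) := by
    linear_combination β * hn' - (dn : ℝ) * hξ'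
  rw [em, en]
  constructor <;> intro h
  · exact lt_of_mul_lt_mul_left (by linarith) hab.le
  · have := (mul_lt_mul_iff_right₀ hab).mpr h
    linarith
end
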